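/- arXiv:1810.09575 — 2 statements merged into one kernel-verified Lean document; each statement's English description precedes it below -/
import Mathlib

section
/- For every α : Finset Q and every β ∈ Z_X(S): α ∩ β ∈ S_Z if and only if β ∈ Z(G_α), and α ∩ β ∈ Z_Z(S) if and only if β ∈ Z(H_α). (Lemma A1.) -/
open Finset
open scoped symmDiff Matrix

namespace CC

variable {Q : Type*} [Fintype Q] [DecidableEq Q]

/-- A subgroup of the abelian group `(Finset Q, ∆)`. -/
def IsSubgroup (S : Set (Finset Q)) : Prop :=
  ∅ ∈ S ∧ ∀ a ∈ S, ∀ b ∈ S, a ∆ b ∈ S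

/-- The subgroup of `(Finset Q, ∆)` generated by a set. -/
def closure (T : Set (Finset Q)) : Set (Finset Q) :=
  ⋂₀ {S : Set (Finset Q) | IsSubgroup S ∧ T ⊆ S}

/-- A CSS stabilizer code on the qubits `Q`. -/
structure CSS (Q : Type*) [Fintype Q] [DecidableEq Q] where
  SX : Set (Finset Q)
  SZ : Set (Finset Q)
  hSX : IsSubgroup SX
  hSZ : IsSubgroup SZ
  comm : ∀ a ∈ SZ, ∀ b ∈ SX, 2 ∣ (a ∩ b).card

def ZX (C : CSS Q) : Set (Finset Q) := {γ | ∀ f ∈ C.SZ, 2 ∣ (γ ∩ f).card}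

def ZZ (C : CSS Q) : Set (Finset Q) := {z | ∀ c ∈ C.SX, 2 ∣ (z ∩ c).card}

/-- Duality assumption. -/
def Dual (C : CSS Q) : Prop :=
  C.SZ = {z | ∀ γ ∈ ZX C, 2 ∣ (z ∩ γ).card} ∧
  C.SX = {c | ∀ z ∈ ZZ C, 2 ∣ (c ∩ z).card}

def LogicalX (C : CSS Q) (l : Finset Q) : Prop := l ∈ ZX C ∧ l ∉ C.SX

def LogicalZ (C : CSS Q) (l : Finset Q) : Prop := l ∈ ZZ C ∧ l ∉ C.SZ

/-- Single-logical-qubit assumption. -/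
def SingleQubit (C : CSS Q) : Prop :=
  (ZX C ≠ C.SX ∧ ∀ l l', LogicalX C l → LogicalX C l' → l ∆ l' ∈ C.SX) ∧
  (ZZ C ≠ C.SZ ∧ ∀ l l', LogicalZ C l → LogicalZ C l' → l ∆ l' ∈ C.SZ)

/-- Intersection axiom. -/
def Inter (C : CSS Q) : Prop :=
  ZZ C = {x | ∃ α ∈ ZX C, ∃ β ∈ ZX C, x = α ∩ β}

def G (C : CSS Q) (α : Finset Q) : Set (Finset Q) :=
  closure (C.SZ ∪ {x | ∃ β ∈ ZX C, x = α ∩ β})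

def H (C : CSS Q) (α : Finset Q) : Set (Finset Q) :=
  closure (C.SZ ∪ {x | ∃ β ∈ C.SX, x = α ∩ β})

def Zof (K : Set (Finset Q)) : Set (Finset Q) := {γ | ∀ h ∈ K, 2 ∣ (γ ∩ h).card}

def Tolerable (C : CSS Q) (α : Finset Q) : Prop := ∀ z ∈ G C α, ¬ LogicalZ C z

def g (b : Q → ℤ) (s : Finset Q) : ℤ := ∑ q ∈ s, b q

/-- T-invariance assumption. -/
def TInv (C : CSS Q) (b : Q → ℤ) : Prop :=
  (∀ β ∈ C.SX, (8 : ℤ) ∣ g b β) ∧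
  (∀ β ∈ C.SX, ∀ γ ∈ ZX C, (8 : ℤ) ∣ (g b β - 2 * g b (γ ∩ β)))

def E (C : CSS Q) (b : Q → ℤ) (α : Finset Q) : Set (Finset Q) :=
  {z | ∀ γ ∈ Zof (G C α), g b (γ ∩ α) ≡ 2 * ((z ∩ γ).card : ℤ) [ZMOD 4]}

/- Quantum setting -/

abbrev M (Q : Type*) [Fintype Q] [DecidableEq Q] :=
  Matrix (Q → ZMod 2) (Q → ZMod 2) ℂ

def supp (v : Q → ZMod 2) : Finset Q := Finset.univ.filter (fun q => v q = 1)

def ind (α : Finset Q) : Q → ZMod 2 := fun q => if q ∈ α then 1 else 0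

def XM (α : Finset Q) : M Q :=
  Matrix.of fun u v => if u = v + ind α then (1 : ℂ) else 0

noncomputable def ZM (α : Finset Q) : M Q :=
  Matrix.diagonal fun v => (-1 : ℂ) ^ (supp v ∩ α).card

noncomputable def AM (b : Q → ℤ) (α : Finset Q) : M Q :=
  Matrix.diagonal fun v => Complex.I ^ (g b (α ∩ supp v))

noncomputable def UM (b : Q → ℤ) : M Q :=
  Matrix.diagonal fun v => Complex.exp (Real.pi * Complex.I / 4) ^ (g b (supp v))

def Encoded (C : CSS Q) (ρ : M Q) : Prop :=
  ρ.trace = 1 ∧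
  (∀ c ∈ C.SX, XM c * ρ = ρ ∧ ρ * XM c = ρ) ∧
  (∀ f ∈ C.SZ, ZM f * ρ = ρ ∧ ρ * ZM f = ρ)

instance : Std.Commutative (α := Finset Q) (· ∆ ·) := ⟨symmDiff_comm⟩
instance : Std.Associative (α := Finset Q) (· ∆ ·) := ⟨symmDiff_assoc⟩

/-- Iterated symmetric difference over a finite index set. -/
def bigΔ {ι : Type*} (s : Finset ι) (f : ι → Finset Q) : Finset Q :=
  s.fold (· ∆ ·) ∅ f

/-! Since `|β ∩ (h ∆ h')| ≡ |β ∩ h| + |β ∩ h'| (mod 2)`, the `h` with `|β ∩ h|` even form a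
subgroup, so `β ∈ Z(⟨T⟩)` iff `β ∈ Z(T)`. For the generators `α ∩ t` of `G_α` and `H_α` one has
`|β ∩ (α ∩ t)| = |(α ∩ β) ∩ t|`, so `β ∈ Z(G_α)` says that `α ∩ β` commutes with `Z_X(S)`, which by
duality is `α ∩ β ∈ S_Z`, and `β ∈ Z(H_α)` says that `α ∩ β` commutes with `S_X`, i.e. lies in `Z_Z(S)`. -/

section

variable {ι : Type*} [DecidableEq ι]

lemma card_symmDiff_add_two_mul_card_inter (s t : Finset ι) :
    #(s ∆ t) + 2 * #(s ∩ t) = #s + #t := by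
  have hst : #(s ∆ t) = #(s \ t) + #(t \ s) :=
    card_union_of_disjoint disjoint_sdiff_sdiff
  have hs := card_sdiff_add_card_inter s t
  have ht := card_sdiff_add_card_inter t s
  rw [inter_comm] at ht
  omega

lemma isSubgroup_setOf_even_card_inter (β : Finset ι) :
    IsSubgroup {h : Finset ι | 2 ∣ #(β ∩ h)} := by
  refine ⟨by simp, fun a ha b hb => ?_⟩
  have hsum := card_symmDiff_add_two_mul_card_inter (β ∩ a) (β ∩ b)
  simp only [Set.mem_ofPred_eq, ← inf_eq_inter, inf_symmDiff_distrib_left] at ha hb hsum ⊢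
  omega

lemma subset_closure (T : Set (Finset ι)) : T ⊆ closure T :=
  fun _ hx _ hS => hS.2 hx

lemma closure_subset {T S : Set (Finset ι)} (hS : IsSubgroup S) (hTS : T ⊆ S) :
    closure T ⊆ S :=
  fun _ hx => hx S ⟨hS, hTS⟩

lemma mem_Zof_closure_iff {T : Set (Finset ι)} {β : Finset ι} :
    β ∈ Zof (closure T) ↔ β ∈ Zof T :=
  ⟨fun hβ h hh => hβ h (subset_closure T hh),
    fun hβ _ hh => closure_subset (isSubgroup_setOf_even_card_inter β) hβ hh⟩

lemma mem_Zof_closure_union_inter_iff {S T : Set (Finset ι)} {α β : Finset ι}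
    (hβ : β ∈ Zof S) :
    β ∈ Zof (closure (S ∪ {x | ∃ t ∈ T, x = α ∩ t})) ↔ ∀ t ∈ T, 2 ∣ #(α ∩ β ∩ t) := by
  rw [mem_Zof_closure_iff]
  constructor
  · intro h t ht
    rw [inter_comm α β, inter_assoc]
    exact h _ (Or.inr ⟨t, ht, rfl⟩)
  · rintro h _ (hx | ⟨t, ht, rfl⟩)
    · exact hβ _ hx
    · rw [← inter_assoc, inter_comm β α]
      exact h t ht

end

theorem mem_SZ_iff_Zof_G_general
    (C : CSS Q) (hdual : Dual C)
    (α β : Finset Q) (hβ : β ∈ ZX C) :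
    (α ∩ β ∈ C.SZ ↔ β ∈ Zof (G C α)) ∧
    (α ∩ β ∈ ZZ C ↔ β ∈ Zof (H C α)) := by
  refine ⟨?_, (mem_Zof_closure_union_inter_iff hβ).symm⟩
  rw [hdual.1]
  exact (mem_Zof_closure_union_inter_iff hβ).symm

/-- Lemma A1. -/
theorem mem_SZ_iff_Zof_G
    (C : CSS Q) (hdual : Dual C) (hinter : Inter C)
    (α β : Finset Q) (hβ : β ∈ ZX C) :
    (α ∩ β ∈ C.SZ ↔ β ∈ Zof (G C α)) ∧
    (α ∩ β ∈ ZZ C ↔ β ∈ Zof (H C α)) :=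
  mem_SZ_iff_Zof_G_general C hdual α β hβ

end CC
end

section
/- Let (S_X, S_Z) be a CSS stabilizer code on a finite type Q satisfying the duality and intersection assumptions, let ρ be an encoded state, let α : Finset Q, and let β ∈ S_X with β ∈ Z(G_α). Then g(α ∩ β) is even and trace(ρ · A_α · X_β · A_α†) = i^{g(α ∩ β)} = (−1)^{g(α ∩ β)/2}. (Lemma A4(i).) -/
open Finset
open scoped symmDiff Matrix

namespace CC

variable {Q : Type*} [Fintype Q] [DecidableEq Q]

/-!
Every `α ∩ γ` with `γ ∈ Z_X` lies in `G_α`, so `β` commutes with all of them and duality puts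
`α ∩ β` into `S_Z`; as `α ∩ β ⊆ β ∈ S_X`, its size, hence `g(α ∩ β)`, is even. Conjugating `X_β`
by the diagonal phase `A_α` yields `i^{g(α ∩ β)} X_β Z_{α ∩ β}`, and both stabilizers fix `ρ`.
-/

lemma g_symmDiff_add_two_mul_g_inter (b : Q → ℤ) (s t : Finset Q) :
    g b (s ∆ t) + 2 * g b (s ∩ t) = g b s + g b t := by
  have hunion : g b (s ∪ t) + g b (s ∩ t) = g b s + g b t := Finset.sum_union_inter
  have hsdiff : g b (s ∆ t) + g b (s ∩ t) = g b (s ∪ t) := by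
    rw [symmDiff_eq_sup_sdiff_inf]
    exact Finset.sum_sdiff Finset.inter_subset_union
  linarith

omit [Fintype Q] [DecidableEq Q] in
lemma even_g_sub_card {b : Q → ℤ} (hb : ∀ q, Odd (b q)) (t : Finset Q) :
    Even (g b t - t.card) := by
  rw [Finset.card_eq_sum_ones, Nat.cast_sum, g, ← Finset.sum_sub_distrib]
  exact Finset.even_sum _ fun q _ => by simpa using (hb q).sub_odd odd_one

omit [Fintype Q] [DecidableEq Q] in
lemma even_g_iff_even_card {b : Q → ℤ} (hb : ∀ q, Odd (b q)) (t : Finset Q) :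
    Even (g b t) ↔ Even t.card := by
  have h := even_g_sub_card hb t
  rw [← Int.even_coe_nat]
  constructor <;> intro ht
  · simpa using ht.sub h
  · simpa using h.add ht

lemma I_zpow_two_mul (k : ℤ) : Complex.I ^ (2 * k) = (-1 : ℂ) ^ k := by
  rw [zpow_mul, zpow_two, Complex.I_mul_I]

lemma star_I_zpow (m : ℤ) : star (Complex.I ^ m) = Complex.I ^ (-m) := by
  rw [star_zpow₀, Complex.star_def, Complex.conj_I, ← Complex.inv_I, inv_zpow, zpow_neg]

lemma neg_one_zpow_eq_of_even_sub {m n : ℤ} (h : Even (m - n)) :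
    (-1 : ℂ) ^ m = (-1 : ℂ) ^ n := by
  rw [← sub_add_cancel m n, zpow_add₀ (by norm_num), h.neg_one_zpow, one_mul]

/-- The phase picked up by `A_α` across a bit flip on `t`. -/
lemma I_zpow_g_symmDiff_mul_star {b : Q → ℤ} (hb : ∀ q, Odd (b q)) (s t : Finset Q) :
    Complex.I ^ g b (s ∆ t) * star (Complex.I ^ g b s) =
      Complex.I ^ g b t * (-1 : ℂ) ^ (s ∩ t).card := by
  have hexp : g b (s ∆ t) + -g b s = g b t + 2 * -g b (s ∩ t) := by
    linarith [g_symmDiff_add_two_mul_g_inter b s t]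
  have hsign : Even (-g b (s ∩ t) - (s ∩ t).card) := by
    obtain ⟨k, hk⟩ := even_g_sub_card hb (s ∩ t)
    exact ⟨-k - (s ∩ t).card, by linarith⟩
  rw [star_I_zpow, ← zpow_add₀ Complex.I_ne_zero, hexp, zpow_add₀ Complex.I_ne_zero,
    I_zpow_two_mul, neg_one_zpow_eq_of_even_sub hsign, zpow_natCast]

lemma supp_add_ind (v : Q → ZMod 2) (β : Finset Q) :
    supp (v + ind β) = supp v ∆ β := by
  ext q
  simp only [supp, Finset.mem_filter, Finset.mem_univ, true_and, Finset.mem_symmDiff]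
  by_cases hq : q ∈ β <;> simp only [ind, hq, Pi.add_apply, if_true, if_false] <;>
    generalize v q = x <;> revert x <;> decide

lemma AM_mul_XM_mul_conjTranspose_AM {b : Q → ℤ} (hb : ∀ q, Odd (b q)) (α β : Finset Q) :
    AM b α * XM β * (AM b α)ᴴ = Complex.I ^ g b (α ∩ β) • (XM β * ZM (α ∩ β)) := by
  ext u v
  simp only [AM, Matrix.diagonal_conjTranspose, Matrix.mul_diagonal, Matrix.diagonal_mul, XM,
    ZM, Matrix.of_apply, Matrix.smul_apply, smul_eq_mul, Pi.star_apply]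
  split_ifs with h
  · have hcap : supp v ∩ (α ∩ β) = (α ∩ supp v) ∩ (α ∩ β) := by
      ext q; simp only [Finset.mem_inter]; tauto
    rw [h, supp_add_ind, show α ∩ supp v ∆ β = (α ∩ supp v) ∆ (α ∩ β) from
      inf_symmDiff_distrib_left _ _ _, mul_one, one_mul, hcap,
      I_zpow_g_symmDiff_mul_star hb]
  · simp only [mul_zero, zero_mul]

lemma inter_mem_G (C : CSS Q) (α : Finset Q) {γ : Finset Q} (hγ : γ ∈ ZX C) :
    α ∩ γ ∈ G C α :=
  fun _ hS => hS.2 (Or.inr ⟨γ, hγ, rfl⟩)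

lemma inter_mem_SZ_of_mem_Zof_G {C : CSS Q} (hdual : Dual C) {α β : Finset Q}
    (hβ : β ∈ Zof (G C α)) : α ∩ β ∈ C.SZ := by
  rw [hdual.1]
  intro γ hγ
  have hcomm : (α ∩ β) ∩ γ = β ∩ (α ∩ γ) := by
    ext q; simp only [Finset.mem_inter]; tauto
  rw [hcomm]
  exact hβ _ (inter_mem_G C α hγ)

lemma even_card_of_mem_SZ_of_subset_of_mem_SX (C : CSS Q) {f c : Finset Q} (hf : f ∈ C.SZ)
    (hc : c ∈ C.SX) (hfc : f ⊆ c) : Even f.card := by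
  have h := C.comm f hf c hc
  rwa [Finset.inter_eq_left.mpr hfc, ← even_iff_two_dvd] at h

lemma Encoded.trace_mul_XM_mul_ZM {C : CSS Q} {ρ : M Q} (hρ : Encoded C ρ) {c f : Finset Q}
    (hc : c ∈ C.SX) (hf : f ∈ C.SZ) : (ρ * (XM c * ZM f)).trace = 1 := by
  rw [← mul_assoc, Matrix.trace_mul_comm, ← mul_assoc, (hρ.2.2 f hf).1, Matrix.trace_mul_comm,
    (hρ.2.1 c hc).1, hρ.1]

theorem expectation_commuting_stabilizer_general
    (C : CSS Q) (b : Q → ℤ) (hb : ∀ q, Odd (b q))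
    (hdual : Dual C)
    (ρ : M Q) (hρ : Encoded C ρ)
    (α β : Finset Q) (hβ : β ∈ C.SX) (hβ' : β ∈ Zof (G C α)) :
    Even (g b (α ∩ β)) ∧
    (ρ * (AM b α * XM β * (AM b α)ᴴ)).trace = Complex.I ^ (g b (α ∩ β)) ∧
    Complex.I ^ (g b (α ∩ β)) = (-1 : ℂ) ^ (g b (α ∩ β) / 2) := by
  have hαβ : α ∩ β ∈ C.SZ := inter_mem_SZ_of_mem_Zof_G hdual hβ'
  have heven : Even (g b (α ∩ β)) := (even_g_iff_even_card hb _).mpr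
    (even_card_of_mem_SZ_of_subset_of_mem_SX C hαβ hβ Finset.inter_subset_right)
  refine ⟨heven, ?_, ?_⟩
  · rw [AM_mul_XM_mul_conjTranspose_AM hb, Matrix.mul_smul, Matrix.trace_smul,
      hρ.trace_mul_XM_mul_ZM hβ hαβ, smul_eq_mul, mul_one]
  · obtain ⟨k, hk⟩ := heven
    rw [hk, ← two_mul, Int.mul_ediv_cancel_left k two_ne_zero, I_zpow_two_mul]

/-- Lemma A4(i): for `β ∈ S_X ∩ Z(G_α)`, `g(α ∩ β)` is even and
`⟨A_α X_β A_α†⟩_ρ = i^{g(α ∩ β)} = (−1)^{g(α ∩ β)/2}`. -/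
theorem expectation_commuting_stabilizer
    (C : CSS Q) (b : Q → ℤ) (hb : ∀ q, Odd (b q))
    (hdual : Dual C) (hinter : Inter C)
    (ρ : M Q) (hρ : Encoded C ρ)
    (α β : Finset Q) (hβ : β ∈ C.SX) (hβ' : β ∈ Zof (G C α)) :
    Even (g b (α ∩ β)) ∧
    (ρ * (AM b α * XM β * (AM b α)ᴴ)).trace = Complex.I ^ (g b (α ∩ β)) ∧
    Complex.I ^ (g b (α ∩ β)) = (-1 : ℂ) ^ (g b (α ∩ β) / 2) :=
  expectation_commuting_stabilizer_general C b hb hdual ρ hρ α β hβ hβ'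

end CC
end
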